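/- arXiv:1611.02442 — 7 statements merged into one kernel-verified Lean document; each statement's English description precedes it below -/
import Mathlib

section
/- Let (R_t, W_t) for t = 1, ..., γ be pairs of non-negative reals satisfying W_t − W_{t+1} ≤ α·R_t for all t ≤ γ−1 and W_γ ≤ α·R_γ, with α ≥ 1. Then for any c ∈ [1, γ·α], there exists an index ℓ ∈ [1, γ] such that W_ℓ ≥ W_1/c and R_ℓ ≥ (1 − 1/c)·W_1/(γ·α). -/
/-!
Let `B = (1 - 1/c) W₁ / (γα)`. Telescoping the charging inequalities gives
`W₁ ≤ α (R₁ + ⋯ + R_γ)`, and `γαB ≤ W₁`, so some `R_t` is at least `B`. At the first such index `ℓ`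
every earlier step loses at most `αB` of welfare, hence `W₁ - W_ℓ ≤ (ℓ - 1)αB ≤ γαB = (1 - 1/c) W₁`,
that is, `W_ℓ ≥ W₁ / c`.
-/

open Finset

section Telescoping

variable {G : Type*} [AddCommGroup G] [PartialOrder G] [IsOrderedAddMonoid G]
  {W f : ℕ → G} {m n : ℕ}

theorem sub_le_sum_Ico_of_sub_succ_le (hmn : m ≤ n)
    (h : ∀ t ∈ Ico m n, W t - W (t + 1) ≤ f t) : W m - W n ≤ ∑ t ∈ Ico m n, f t := by
  have htel : ∑ t ∈ Ico m n, (W t - W (t + 1)) = W m - W n := by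
    simpa only [sub_neg_eq_add, neg_add_eq_sub] using sum_Ico_sub (fun t => -W t) hmn
  exact htel ▸ sum_le_sum h

theorem sub_le_nsmul_of_sub_succ_le {b : G} (hmn : m ≤ n)
    (h : ∀ t ∈ Ico m n, W t - W (t + 1) ≤ b) : W m - W n ≤ (n - m) • b := by
  simpa using
    (sub_le_sum_Ico_of_sub_succ_le hmn h).trans (sum_le_card_nsmul _ _ _ fun _ _ => le_rfl)

theorem le_sum_Icc_of_sub_succ_le (hmn : m ≤ n)
    (h : ∀ t ∈ Ico m n, W t - W (t + 1) ≤ f t) (hlast : W n ≤ f n) :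
    W m ≤ ∑ t ∈ Icc m n, f t := by
  rw [← Ico_add_one_right_eq_Icc, sum_Ico_succ_top hmn]
  calc W m = (W m - W n) + W n := (sub_add_cancel _ _).symm
    _ ≤ _ := add_le_add (sub_le_sum_Ico_of_sub_succ_le hmn h) hlast

end Telescoping

theorem exists_mem_Icc_le_of_charging {R W : ℕ → ℝ} {α B : ℝ} {m n : ℕ} (hα : 0 < α)
    (hmn : m ≤ n) (hstep : ∀ t ∈ Ico m n, W t - W (t + 1) ≤ α * R t) (hlast : W n ≤ α * R n)
    (hB : α * ((n + 1 - m : ℕ) * B) ≤ W m) : ∃ t ∈ Icc m n, B ≤ R t := by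
  have hcharge := le_sum_Icc_of_sub_succ_le hmn hstep hlast
  rw [← mul_sum] at hcharge
  refine exists_le_of_sum_le (nonempty_Icc.2 hmn) ?_
  simpa using le_of_mul_le_mul_left (hB.trans hcharge) hα

theorem stmt_3_general (γ : ℕ) (hγ : 1 ≤ γ) (R W : ℕ → ℝ) (α c : ℝ)
    (hW : ∀ t, 0 ≤ W t) (hα : 1 ≤ α)
    (hc1 : 1 ≤ c)
    (hstep : ∀ t, 1 ≤ t → t ≤ γ - 1 → W t - W (t + 1) ≤ α * R t)
    (hlast : W γ ≤ α * R γ) :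
    ∃ ℓ, 1 ≤ ℓ ∧ ℓ ≤ γ ∧ W 1 / c ≤ W ℓ ∧ (1 - 1 / c) * W 1 / (γ * α) ≤ R ℓ := by
  set B := (1 - 1 / c) * W 1 / (γ * α) with hB
  have hα0 : 0 < α := by linarith
  have hγα : 0 < (γ : ℝ) * α := by positivity
  have hB0 : 0 ≤ B :=
    div_nonneg (mul_nonneg (sub_nonneg.2 (div_le_one_of_le₀ hc1 (by linarith))) (hW 1)) hγα.le
  have hγαB : γ * α * B = W 1 - W 1 / c := by rw [hB]; field_simp
  have hdrop : ∀ ℓ ≤ γ, ∀ t ∈ Ico 1 ℓ, W t - W (t + 1) ≤ α * R t := fun ℓ hℓ t ht =>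
    hstep t (mem_Ico.1 ht).1 (by have := (mem_Ico.1 ht).2; omega)
  have hex : ∃ t ∈ Icc 1 γ, B ≤ R t :=
    exists_mem_Icc_le_of_charging hα0 hγ (hdrop γ le_rfl) hlast (by
      have : 0 ≤ W 1 / c := div_nonneg (hW 1) (by linarith)
      simp only [Nat.add_sub_cancel]
      linarith)
  classical
  obtain ⟨hℓ, hℓR⟩ := Nat.find_spec hex
  obtain ⟨hℓ1, hℓγ⟩ := mem_Icc.1 hℓ
  refine ⟨Nat.find hex, hℓ1, hℓγ, ?_, hℓR⟩
  have hsmall : ∀ t ∈ Ico 1 (Nat.find hex), W t - W (t + 1) ≤ α * B := fun t ht => by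
    obtain ⟨ht1, htℓ⟩ := mem_Ico.1 ht
    have hRB : R t < B := not_le.1 fun h => Nat.find_min hex htℓ ⟨mem_Icc.2 ⟨ht1, by omega⟩, h⟩
    exact (hdrop _ hℓγ t ht).trans (mul_le_mul_of_nonneg_left hRB.le hα0.le)
  have hloss := calc
    W 1 - W (Nat.find hex) ≤ (Nat.find hex - 1) • (α * B) := sub_le_nsmul_of_sub_succ_le hℓ1 hsmall
    _ ≤ γ • (α * B) := nsmul_le_nsmul_left (by positivity) (by omega)
    _ = W 1 - W 1 / c := by rw [nsmul_eq_mul, ← hγαB]; ring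
  linarith

/-- Bicriteria version of the simple charging property: for any target
parameter `c ∈ [1, γ·α]` there is an index `ℓ ∈ [1, γ]` with
`W ℓ ≥ W 1 / c` and `R ℓ ≥ (1 − 1/c) · W 1 / (γ·α)`. -/
theorem stmt_3 (γ : ℕ) (hγ : 1 ≤ γ) (R W : ℕ → ℝ) (α c : ℝ)
    (hR : ∀ t, 0 ≤ R t) (hW : ∀ t, 0 ≤ W t) (hα : 1 ≤ α)
    (hc1 : 1 ≤ c) (hc2 : c ≤ γ * α)
    (hstep : ∀ t, 1 ≤ t → t ≤ γ - 1 → W t - W (t + 1) ≤ α * R t)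
    (hlast : W γ ≤ α * R γ) :
    ∃ ℓ, 1 ≤ ℓ ∧ ℓ ≤ γ ∧ W 1 / c ≤ W ℓ ∧ (1 - 1 / c) * W 1 / (γ * α) ≤ R ℓ :=
  stmt_3_general γ hγ R W α c hW hα hc1 hstep hlast
end

section
/- Let B_t (t = 1, ..., γ) and (R_t) be non-negative reals with B_t − B_{t+1} ≤ α·R_t + B_t/β for all t ≤ γ−1, and B_γ ≤ α·R_γ, where α, β ≥ 1. Then there exists ℓ ∈ [1, γ] such that R_ℓ ≥ (B_1/(γ·α))·(1 − (γ−1)/β). -/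
/-- Generalized charging property: if `B t − B (t+1) ≤ α·R t + B t/β` for
`1 ≤ t ≤ γ−1` and `B γ ≤ α·R γ`, with `α, β ≥ 1`, then some `ℓ ∈ [1, γ]` has
`R ℓ ≥ (B 1/(γ·α))·(1 − (γ−1)/β)`. -/
theorem stmt_4 (γ : ℕ) (hγ : 1 ≤ γ) (B R : ℕ → ℝ) (α β : ℝ)
    (hB : ∀ t, 0 ≤ B t) (hR : ∀ t, 0 ≤ R t) (hα : 1 ≤ α) (hβ : 1 ≤ β)
    (hstep : ∀ t, 1 ≤ t → t ≤ γ - 1 → B t - B (t + 1) ≤ α * R t + B t / β)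
    (hlast : B γ ≤ α * R γ) :
    ∃ ℓ, 1 ≤ ℓ ∧ ℓ ≤ γ ∧ B 1 / (γ * α) * (1 - ((γ : ℝ) - 1) / β) ≤ R ℓ := by
  have hβ0 : (0:ℝ) < β := lt_of_lt_of_le one_pos hβ
  have hα0 : (0:ℝ) < α := lt_of_lt_of_le one_pos hα
  have hγ0 : (0:ℝ) < (γ:ℝ) := by exact_mod_cast hγ
  by_cases hc : 1 - ((γ : ℝ) - 1) / β < 0
  · refine ⟨γ, hγ, le_refl _, le_trans ?_ (hR γ)⟩
    exact mul_nonpos_of_nonneg_of_nonpos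
      (div_nonneg (hB 1) (le_of_lt (mul_pos hγ0 hα0))) (le_of_lt hc)
  push_neg at hc
  -- key telescoping lemma
  have key : ∀ d t, t + d = γ → 1 ≤ t →
      B t ≤ α * ∑ s ∈ Finset.Icc t γ, R s + (∑ s ∈ Finset.Icc t (γ-1), B s)/β := by
    intro d
    induction d with
    | zero =>
      intro t ht h1
      have : t = γ := by omega
      subst this
      rw [Finset.Icc_self, Finset.Icc_eq_empty (by omega)]
      simpa using hlast
    | succ d ih =>
      intro t ht h1
      have htγ : t < γ := by omega
      have step := hstep t h1 (by omega)
      have ihh := ih (t+1) (by omega) (by omega)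
      have e1 : Finset.Icc t γ = insert t (Finset.Icc (t+1) γ) := by
        ext x; simp [Finset.mem_Icc, Finset.mem_insert]; omega
      have e2 : Finset.Icc t (γ-1) = insert t (Finset.Icc (t+1) (γ-1)) := by
        ext x; simp [Finset.mem_Icc, Finset.mem_insert]; omega
      rw [e1, e2, Finset.sum_insert (by simp), Finset.sum_insert (by simp),
        add_div]
      have := hB (t+1)
      nlinarith [hR t, hB t]
  obtain ⟨r, hrmem, hrmax⟩ := Finset.exists_max_image (Finset.Icc 1 γ) B ⟨1, by simp [hγ]⟩
  obtain ⟨ℓ, hℓmem, hℓmax⟩ := Finset.exists_max_image (Finset.Icc 1 γ) R ⟨1, by simp [hγ]⟩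
  simp only [Finset.mem_Icc] at hrmem hℓmem
  refine ⟨ℓ, hℓmem.1, hℓmem.2, ?_⟩
  have hkey := key (γ - r) r (by omega) hrmem.1
  have hsumR : ∑ s ∈ Finset.Icc r γ, R s ≤ (γ:ℝ) * R ℓ := by
    calc ∑ s ∈ Finset.Icc r γ, R s ≤ (Finset.Icc r γ).card • R ℓ := by
          apply Finset.sum_le_card_nsmul
          intro x hx
          simp only [Finset.mem_Icc] at hx
          exact hℓmax x (Finset.mem_Icc.mpr ⟨le_trans hrmem.1 hx.1, hx.2⟩)
      _ ≤ (γ:ℝ) * R ℓ := by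
          rw [nsmul_eq_mul]
          apply mul_le_mul_of_nonneg_right _ (hR ℓ)
          rw [Nat.card_Icc]
          exact_mod_cast Nat.le_of_lt_succ (by omega)
  have hsumB : ∑ s ∈ Finset.Icc r (γ-1), B s ≤ ((γ:ℝ) - 1) * B r := by
    calc ∑ s ∈ Finset.Icc r (γ-1), B s ≤ (Finset.Icc r (γ-1)).card • B r := by
          apply Finset.sum_le_card_nsmul
          intro x hx
          simp only [Finset.mem_Icc] at hx
          exact hrmax x (Finset.mem_Icc.mpr ⟨le_trans hrmem.1 hx.1, by omega⟩)
      _ ≤ ((γ:ℝ) - 1) * B r := by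
          rw [nsmul_eq_mul]
          apply mul_le_mul_of_nonneg_right _ (hB r)
          rw [Nat.card_Icc]
          have h1 : (γ - 1 + 1 - r : ℕ) ≤ γ - 1 := by omega
          calc ((γ - 1 + 1 - r : ℕ) : ℝ) ≤ ((γ - 1 : ℕ) : ℝ) := by exact_mod_cast h1
            _ = (γ:ℝ) - 1 := by rw [Nat.cast_sub hγ]; norm_num
  -- B r ≤ α * (γ * R ℓ) + ((γ-1) * B r)/β
  have hBr : B r ≤ α * ((γ:ℝ) * R ℓ) + (((γ:ℝ) - 1) * B r)/β := by
    refine le_trans hkey (add_le_add ?_ ?_)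
    · exact mul_le_mul_of_nonneg_left hsumR (le_of_lt hα0)
    · exact div_le_div_of_nonneg_right hsumB hβ0.le
  have hB1r : B 1 ≤ B r := hrmax 1 (by simp [hγ])
  have hmain : B 1 * (1 - ((γ:ℝ) - 1) / β) ≤ (γ:ℝ) * α * R ℓ := by
    have h1 : B r * (1 - ((γ:ℝ) - 1) / β) ≤ (γ:ℝ) * α * R ℓ := by
      have : (((γ:ℝ) - 1) * B r)/β = ((γ:ℝ) - 1)/β * B r := by ring
      rw [this] at hBr
      nlinarith
    exact le_trans (mul_le_mul_of_nonneg_right hB1r hc) h1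
  rw [div_mul_eq_mul_div, div_le_iff₀ (mul_pos hγ0 hα0)]
  linarith [mul_comm (R ℓ) ((γ:ℝ) * α)]
end

section
/- Let B_t, R_t, S_t (t = 1, ..., γ) be non-negative reals with α, β ≥ 1 such that: (i) B_t − B_{t+1} ≤ α·R_t + B_t/β for t ≤ γ−1; (ii) B_γ ≤ α·R_γ; and (iii) B_t·(1 − 1/β) ≤ α·R_t + S_t for all t. Assume B_1 = max_t B_t. Let ℓ be the smallest index with R_ℓ ≥ (B_1/(2γα))·(1 − (γ−1)/β), and write R_ℓ = (c/(2γα))·B_1·(1 − (γ−1)/β) for some c ≥ 1. Then R_ℓ + S_ℓ ≥ B_1·(1 − (γ−1)/β)·((1/2)(1 − 1/β) − c/(2γ) + c/(2γα)). -/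
/-- Bicriteria claim for the generalized charging property: with the charging
hypotheses, the surplus hypothesis `B t·(1−1/β) ≤ α·R t + S t`, `B 1` maximal,
`ℓ` the smallest index with `R ℓ ≥ (B 1/(2γα))·(1 − (γ−1)/β)`, and
`R ℓ = (c/(2γα))·B 1·(1 − (γ−1)/β)` for some `c ≥ 1`, one has
`R ℓ + S ℓ ≥ B 1·(1 − (γ−1)/β)·((1/2)(1 − 1/β) − c/(2γ) + c/(2γα))`. -/
theorem stmt_5 (γ : ℕ) (hγ : 1 ≤ γ) (B R S : ℕ → ℝ) (α β c : ℝ) (ℓ : ℕ)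
    (hB : ∀ t, 0 ≤ B t) (hR : ∀ t, 0 ≤ R t) (hS : ∀ t, 0 ≤ S t)
    (hα : 1 ≤ α) (hβ : 1 ≤ β)
    (hstep : ∀ t, 1 ≤ t → t ≤ γ - 1 → B t - B (t + 1) ≤ α * R t + B t / β)
    (hlast : B γ ≤ α * R γ)
    (hsurp : ∀ t, 1 ≤ t → t ≤ γ → B t * (1 - 1 / β) ≤ α * R t + S t)
    (hmax : ∀ t, 1 ≤ t → t ≤ γ → B t ≤ B 1)
    (hℓ1 : 1 ≤ ℓ) (hℓγ : ℓ ≤ γ)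
    (hℓ : B 1 / (2 * γ * α) * (1 - ((γ : ℝ) - 1) / β) ≤ R ℓ)
    (hℓmin : ∀ t, 1 ≤ t → t < ℓ → R t < B 1 / (2 * γ * α) * (1 - ((γ : ℝ) - 1) / β))
    (hc : 1 ≤ c)
    (hRc : R ℓ = c / (2 * γ * α) * B 1 * (1 - ((γ : ℝ) - 1) / β)) :
    B 1 * (1 - ((γ : ℝ) - 1) / β) *
        ((1 / 2) * (1 - 1 / β) - c / (2 * γ) + c / (2 * γ * α)) ≤ R ℓ + S ℓ := by
  have hα0 : (0:ℝ) < α := lt_of_lt_of_le one_pos hα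
  have hβ0 : (0:ℝ) < β := lt_of_lt_of_le one_pos hβ
  have hγ0 : (0:ℝ) < (γ:ℕ) := by exact_mod_cast hγ
  have hc0 : (0:ℝ) < c := lt_of_lt_of_le one_pos hc
  set K : ℝ := B 1 * (1 - ((γ : ℝ) - 1) / β) with hKdef
  set Th : ℝ := B 1 / (2 * γ * α) * (1 - ((γ : ℝ) - 1) / β) with hThdef
  have hcpos : (0:ℝ) < c / (2 * γ * α) := by positivity
  have hRK : R ℓ = c / (2 * γ * α) * K := by rw [hRc, hKdef]; ring
  have hK : 0 ≤ K := by
    have h0 : 0 ≤ c / (2 * γ * α) * K := hRK ▸ hR ℓ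
    nlinarith
  have hThK : Th = K / (2 * γ * α) := by rw [hThdef, hKdef]; ring
  have hTh : 0 ≤ Th := by rw [hThK]; positivity
  set D : ℝ := α * Th + B 1 / β with hDdef
  clear_value K Th D
  have hD : 0 ≤ D := by
    rw [hDdef]
    exact add_nonneg (mul_nonneg hα0.le hTh) (div_nonneg (hB 1) hβ0.le)
  have key : ∀ t, 1 ≤ t → t ≤ ℓ → B 1 - ((t:ℝ) - 1) * D ≤ B t := by
    intro t
    induction t with
    | zero => intro h; omega
    | succ n ih =>
      intro h1 hle
      rcases Nat.eq_zero_or_pos n with hn | hn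
      · subst hn; push_cast; simp
      · have hnℓ : n < ℓ := by omega
        have hnγ1 : n ≤ γ - 1 := by omega
        have hnγ : n ≤ γ := by omega
        have ihn := ih hn (le_of_lt hnℓ)
        have hstepn := hstep n hn hnγ1
        have hRn := hℓmin n hn hnℓ
        have hBn := hmax n hn hnγ
        have h1 : α * R n ≤ α * Th := by
          apply mul_le_mul_of_nonneg_left (le_of_lt hRn) (le_of_lt hα0)
        have h2 : B n / β ≤ B 1 / β := by gcongr
        have hexp : ((n:ℝ) + 1 - 1) * D = ((n:ℝ) - 1) * D + D := by ring
        push_cast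
        rw [hexp]
        linarith [hDdef]
  have hBl : K / 2 ≤ B ℓ := by
    have hk := key ℓ hℓ1 le_rfl
    have hℓγ' : ((ℓ:ℝ) - 1) ≤ ((γ:ℝ) - 1) := by
      have : (ℓ:ℝ) ≤ (γ:ℝ) := by exact_mod_cast hℓγ
      linarith
    have hℓ1' : (1:ℝ) ≤ (ℓ:ℝ) := by exact_mod_cast hℓ1
    have hαTh : α * Th = K / (2 * γ) := by
      rw [hThK]; field_simp
    have hKB : B 1 - ((γ:ℝ) - 1) * (B 1 / β) = K := by
      rw [hKdef]; ring
    -- B 1 - (ℓ-1) D ≥ B 1 - (γ-1) D = K - (γ-1)/(2γ) K ≥ K/2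
    have hmono : B 1 - ((γ:ℝ) - 1) * D ≤ B 1 - ((ℓ:ℝ) - 1) * D := by
      nlinarith
    have hexp : B 1 - ((γ:ℝ) - 1) * D = K - ((γ:ℝ) - 1) * (K / (2 * γ)) := by
      rw [hDdef, hαTh]; linear_combination hKB
    have hge : K / 2 ≤ K - ((γ:ℝ) - 1) * (K / (2 * γ)) := by
      have heq : ((γ:ℝ) - 1) * (K / (2 * γ)) = K / 2 - K / (2 * γ) := by
        field_simp
      have hpos : 0 ≤ K / (2 * γ) := by positivity
      linarith
    linarith
  have hsl := hsurp ℓ hℓ1 hℓγ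
  have h1β : (0:ℝ) ≤ 1 - 1 / β := by
    have : 1 / β ≤ 1 := by rw [div_le_one hβ0]; exact hβ
    linarith
  have hBl2 : K / 2 * (1 - 1 / β) ≤ B ℓ * (1 - 1 / β) :=
    mul_le_mul_of_nonneg_right hBl h1β
  -- final algebra
  have hfinal : K * ((1 / 2) * (1 - 1 / β) - c / (2 * γ) + c / (2 * γ * α))
      = K / 2 * (1 - 1 / β) + (1 - α) * (c / (2 * γ * α) * K) := by
    field_simp
    ring
  rw [hfinal, ← hRK]
  linarith
end

section
/- Fix an allocation B of goods to buyers with XoS valuations, and a parameter α ≥ 1. Set prices p_i = U_i(B)/(α·k_i(B)) for each good i with k_i(B) > 0, where U_i(B) = Σ_{j ∈ N_i(B)} x_j^{B_j}(i) is the total clause value of good i in B. Run a sequential posted-price mechanism with these prices and supply q_i = k_i(B), arbitrary arrival order, producing allocation S with revenue Rev and buyer surplus Surp. Then SW(B) − Surp ≤ α·Rev + SW(B)/α. -/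
/-- Remaining supply of good `i` after the first `t` buyers (arriving in index
order) have purchased their bundles. -/
def remSupply {I : Type*} [DecidableEq I] (q : I → ℕ) (S : ℕ → Finset I) : ℕ → I → ℕ
  | 0 => q
  | t + 1 => fun i => remSupply q S t i - (if i ∈ S t then 1 else 0)

/-- Goods still available (positive remaining supply) when buyer `t` arrives. -/
def avail {I : Type*} [Fintype I] [DecidableEq I] (q : I → ℕ) (S : ℕ → Finset I)
    (t : ℕ) : Finset I :=
  Finset.univ.filter fun i => 0 < remSupply q S t i

private lemma remSupply_eq {I : Type*} [DecidableEq I] (q : I → ℕ) (S : ℕ → Finset I) :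
    ∀ (t : ℕ) (i : I), remSupply q S t i
      = q i - ((Finset.range t).filter fun j => i ∈ S j).card
  | 0, i => by simp [remSupply]
  | t + 1, i => by
    show remSupply q S t i - (if i ∈ S t then 1 else 0) = _
    rw [remSupply_eq q S t i, Finset.range_add_one, Finset.filter_insert]
    by_cases h : i ∈ S t
    · rw [if_pos h, if_pos h, Finset.card_insert_of_notMem (by simp)]
      omega
    · rw [if_neg h, if_neg h]
      omega

/-- Scaled-price sequential mechanism for XoS buyers: with prices
`p i = U_i(B)/(α·k_i(B))` and supply `q_i = k_i(B)`, the output allocation `S`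
of the sequential mechanism (buyers arrive in an arbitrary order, here indexed
`0, …, nb−1`, each buying a utility-maximizing bundle of available goods)
satisfies `SW(B) − Surp(p,S) ≤ α·Rev(p,S) + SW(B)/α`. -/
theorem stmt_10 {I : Type*} [Fintype I] [DecidableEq I] (nb : ℕ)
    (v : ℕ → Finset I → ℝ) (B S : ℕ → Finset I) (x : ℕ → I → ℝ)
    (α : ℝ) (hα : 1 ≤ α)
    -- k_i(B), U_i(B), and the prices
    (kB : I → ℕ) (hkB : ∀ i, kB i = ((Finset.range nb).filter fun j => i ∈ B j).card)
    (U : I → ℝ) (hU : ∀ i, U i = ∑ j ∈ (Finset.range nb).filter (fun j => i ∈ B j), x j i)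
    (p : I → ℝ) (hp : ∀ i, kB i ≠ 0 → p i = U i / (α * kB i))
    -- goods with k_i(B) = 0 are priced at ∞, hence never purchased
    (hpinf : ∀ j, j < nb → ∀ i ∈ S j, kB i ≠ 0)
    -- x j is the maximizing XoS clause of buyer j for her bundle B j
    (hxnn : ∀ j i, 0 ≤ x j i)
    (hclause : ∀ j, j < nb → ∀ T ⊆ B j, ∑ i ∈ T, x j i ≤ v j T)
    (hxB : ∀ j, j < nb → v j (B j) = ∑ i ∈ B j, x j i)
    -- sequential mechanism semantics: feasibility and utility maximization
    (hfeas : ∀ j, j < nb → S j ⊆ avail kB S j)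
    (hopt : ∀ j, j < nb → ∀ T ⊆ avail kB S j,
      v j T - ∑ i ∈ T, p i ≤ v j (S j) - ∑ i ∈ S j, p i) :
    (∑ j ∈ Finset.range nb, v j (B j)) -
        (∑ j ∈ Finset.range nb, (v j (S j) - ∑ i ∈ S j, p i)) ≤
      α * (∑ j ∈ Finset.range nb, ∑ i ∈ S j, p i) +
        (∑ j ∈ Finset.range nb, v j (B j)) / α := by
  classical
  have hα0 : (0:ℝ) < α := lt_of_lt_of_le one_pos hα
  have hUnn : ∀ i, 0 ≤ U i := fun i => by
    rw [hU]; exact Finset.sum_nonneg fun j _ => hxnn j i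
  have hpnn : ∀ i, kB i ≠ 0 → 0 ≤ p i := fun i hk => by
    rw [hp i hk]
    refine div_nonneg (hUnn i) ?_
    have : (0:ℝ) ≤ (kB i : ℝ) := Nat.cast_nonneg _
    positivity
  have hkBpos : ∀ j, j < nb → ∀ i ∈ B j, kB i ≠ 0 := by
    intro j hj i hi
    rw [hkB]
    exact Finset.card_ne_zero_of_mem (Finset.mem_filter.mpr ⟨Finset.mem_range.mpr hj, hi⟩)
  -- social welfare identity
  have hSW : ∑ i : I, U i = ∑ j ∈ Finset.range nb, v j (B j) := by
    have e1 : ∀ j ∈ Finset.range nb, v j (B j) = ∑ i : I, if i ∈ B j then x j i else 0 := by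
      intro j hj
      rw [hxB j (Finset.mem_range.mp hj)]
      simp [Finset.sum_ite_mem]
    rw [Finset.sum_congr rfl e1, Finset.sum_comm]
    refine Finset.sum_congr rfl fun i _ => ?_
    rw [hU, Finset.sum_filter]
  -- count of purchases
  set cnt : ℕ → I → ℕ := fun t i => ((Finset.range t).filter fun j => i ∈ S j).card with hcnt
  -- sold-out goods
  set D : Finset I := Finset.univ.filter
    (fun i => ∃ j, j < nb ∧ i ∈ B j ∧ i ∉ avail kB S j) with hD
  have hDsold : ∀ i ∈ D, kB i ≤ cnt nb i := by
    intro i hi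
    obtain ⟨j, hj, _, hiav⟩ := (Finset.mem_filter.mp hi).2
    have h0 : remSupply kB S j i = 0 := by
      by_contra h
      exact hiav (Finset.mem_filter.mpr ⟨Finset.mem_univ i, Nat.pos_of_ne_zero h⟩)
    rw [remSupply_eq] at h0
    have h1 : kB i ≤ cnt j i := Nat.le_of_sub_eq_zero h0
    exact le_trans h1 (Finset.card_le_card
      (Finset.filter_subset_filter _ (Finset.range_subset_range.mpr hj.le)))
  -- per-buyer bound
  have hbuyer : ∀ j ∈ Finset.range nb,
      v j (B j) - (v j (S j) - ∑ i ∈ S j, p i) ≤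
        (∑ i ∈ B j \ avail kB S j, x j i) + ∑ i ∈ B j, p i := by
    intro j hj'
    have hj := Finset.mem_range.mp hj'
    have h1 := hopt j hj (B j ∩ avail kB S j) Finset.inter_subset_right
    have h2 : ∑ i ∈ B j ∩ avail kB S j, x j i ≤ v j (B j ∩ avail kB S j) :=
      hclause j hj _ Finset.inter_subset_left
    have hsplit : ∑ i ∈ B j ∩ avail kB S j, x j i + ∑ i ∈ B j \ avail kB S j, x j i
        = ∑ i ∈ B j, x j i := Finset.sum_inter_add_sum_sdiff _ _ _
    have h3 : ∑ i ∈ B j ∩ avail kB S j, p i ≤ ∑ i ∈ B j, p i :=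
      Finset.sum_le_sum_of_subset_of_nonneg Finset.inter_subset_left
        (fun i hi _ => hpnn i (hkBpos j hj i hi))
    have h4 : v j (B j) = ∑ i ∈ B j, x j i := hxB j hj
    linarith
  have hmain : (∑ j ∈ Finset.range nb, v j (B j)) -
      (∑ j ∈ Finset.range nb, (v j (S j) - ∑ i ∈ S j, p i)) ≤
      (∑ j ∈ Finset.range nb, ∑ i ∈ B j \ avail kB S j, x j i) +
      ∑ j ∈ Finset.range nb, ∑ i ∈ B j, p i := by
    rw [← Finset.sum_sub_distrib, ← Finset.sum_add_distrib]
    exact Finset.sum_le_sum hbuyer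
  -- total price of bundles B equals SW / α
  have hpsum : ∑ j ∈ Finset.range nb, ∑ i ∈ B j, p i
      = (∑ j ∈ Finset.range nb, v j (B j)) / α := by
    have e1 : ∀ j ∈ Finset.range nb, ∑ i ∈ B j, p i
        = ∑ i : I, if i ∈ B j then p i else 0 := by
      intro j _; simp [Finset.sum_ite_mem]
    rw [Finset.sum_congr rfl e1, Finset.sum_comm, ← hSW, Finset.sum_div]
    refine Finset.sum_congr rfl fun i _ => ?_
    rw [← Finset.sum_filter]
    rcases eq_or_ne (kB i) 0 with hk | hk
    · have hempty : ((Finset.range nb).filter fun j => i ∈ B j) = ∅ := by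
        rw [← Finset.card_eq_zero, ← hkB]; exact hk
      have hU0 : U i = 0 := by rw [hU, hempty, Finset.sum_empty]
      rw [hempty, Finset.sum_empty, hU0, zero_div]
    · rw [Finset.sum_const, ← hkB, hp i hk, nsmul_eq_mul]
      have hk0 : (0:ℝ) < (kB i : ℝ) := by exact_mod_cast Nat.pos_of_ne_zero hk
      field_simp
  -- unavailable-goods term bounded by sold-out clause values
  have hDsum : (∑ j ∈ Finset.range nb, ∑ i ∈ B j \ avail kB S j, x j i)
      ≤ ∑ i ∈ D, U i := by
    have e1 : ∀ j ∈ Finset.range nb, ∑ i ∈ B j \ avail kB S j, x j i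
        = ∑ i : I, if i ∈ B j \ avail kB S j then x j i else 0 := by
      intro j _; rw [Finset.sum_ite_mem, Finset.univ_inter]
    have e2 : ∑ i ∈ D, U i = ∑ i : I, if i ∈ D then U i else 0 := by
      simp [Finset.sum_ite_mem]
    rw [Finset.sum_congr rfl e1, Finset.sum_comm, e2]
    refine Finset.sum_le_sum fun i _ => ?_
    by_cases hi : i ∈ D
    · rw [if_pos hi, hU, Finset.sum_filter]
      refine Finset.sum_le_sum fun j _ => ?_
      split_ifs with h1 h2
      · exact le_refl _
      · exact absurd (Finset.mem_sdiff.mp h1).1 h2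
      · exact hxnn j i
      · exact le_refl 0
    · rw [if_neg hi]
      refine le_of_eq (Finset.sum_eq_zero fun j hj => ?_)
      rw [if_neg]
      intro hij
      obtain ⟨hiB, hiav⟩ := Finset.mem_sdiff.mp hij
      exact hi (Finset.mem_filter.mpr ⟨Finset.mem_univ i,
        ⟨j, Finset.mem_range.mp hj, hiB, hiav⟩⟩)
  -- revenue bound
  have hRev : ∑ i ∈ D, U i ≤ α * ∑ j ∈ Finset.range nb, ∑ i ∈ S j, p i := by
    have e1 : ∀ j ∈ Finset.range nb, ∑ i ∈ S j, p i
        = ∑ i : I, if i ∈ S j then p i else 0 := by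
      intro j _; simp [Finset.sum_ite_mem]
    have e2 : ∑ i ∈ D, U i = ∑ i : I, if i ∈ D then U i else 0 := by
      simp [Finset.sum_ite_mem]
    rw [Finset.sum_congr rfl e1, Finset.sum_comm, Finset.mul_sum, e2]
    refine Finset.sum_le_sum fun i _ => ?_
    have hr : ∑ j ∈ Finset.range nb, (if i ∈ S j then p i else 0)
        = (cnt nb i : ℝ) * p i := by
      rw [← Finset.sum_filter, Finset.sum_const, nsmul_eq_mul]
    rw [hr]
    by_cases hi : i ∈ D
    · rw [if_pos hi]
      have hk : kB i ≠ 0 := by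
        obtain ⟨j, hj, hiB, _⟩ := (Finset.mem_filter.mp hi).2
        exact hkBpos j hj i hiB
      have hsold : (kB i : ℝ) ≤ (cnt nb i : ℝ) := by exact_mod_cast hDsold i hi
      have hk0 : (0:ℝ) < (kB i : ℝ) := by exact_mod_cast Nat.pos_of_ne_zero hk
      rw [hp i hk]
      calc U i = (kB i : ℝ) * (U i / (kB i : ℝ)) := by field_simp
        _ ≤ (cnt nb i : ℝ) * (U i / (kB i : ℝ)) :=
            mul_le_mul_of_nonneg_right hsold (div_nonneg (hUnn i) hk0.le)
        _ = α * ((cnt nb i : ℝ) * (U i / (α * (kB i : ℝ)))) := by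
            field_simp
    · rw [if_neg hi]
      rcases Nat.eq_zero_or_pos (cnt nb i) with h0 | h0
      · rw [h0]; simp
      · obtain ⟨j, hj⟩ := Finset.card_pos.mp h0
        have hj' := Finset.mem_filter.mp hj
        have hk := hpinf j (Finset.mem_range.mp hj'.1) i hj'.2
        exact mul_nonneg hα0.le (mul_nonneg (Nat.cast_nonneg _) (hpnn i hk))
  linarith
end

section
/- Fix an allocation B with XoS buyers and α ≥ 1, prices p_i = U_i(B)/(α·k_i(B)), supply q_i = k_i(B). Let S^M be the output of the sequential mechanism with these parameters, and let S be the allocation assigning, for each good i, its q_i − k_i(S^M) unsold copies to the buyers in Top_i(q_i − k_i(S^M), B) (the buyers in N_i(B) with highest clause values x_j^{B_j}(i)). Then SW(B) − SW(S) ≤ α·Rev(p, S^M). -/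
/-- Averaging comparison: if every value over `E` is at most every value over `D`,
then `|D| · Σ_E f ≤ |E| · Σ_D f`. -/
lemma avg_lemma {β : Type*} (E D : Finset β) (f : β → ℝ)
    (h : ∀ e ∈ E, ∀ d ∈ D, f e ≤ f d) :
    (D.card : ℝ) * ∑ e ∈ E, f e ≤ (E.card : ℝ) * ∑ d ∈ D, f d := by
  have h1 : ∑ e ∈ E, ∑ _d ∈ D, f e = (D.card : ℝ) * ∑ e ∈ E, f e := by
    simp [Finset.sum_const, nsmul_eq_mul, Finset.mul_sum]
  have h2 : ∑ _e ∈ E, ∑ d ∈ D, f d = (E.card : ℝ) * ∑ d ∈ D, f d := by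
    simp [Finset.sum_const, nsmul_eq_mul]
  rw [← h1, ← h2]
  exact Finset.sum_le_sum fun e he => Finset.sum_le_sum fun d hd => h e he d hd

/-- Alloc-Unsold bound: with prices `p i = U_i(B)/(α·k_i(B))` and supply
`q_i = k_i(B)`, let `SM` be the output of the sequential mechanism and let `C`
allocate, for each good `i`, its `k_i(B) − k_i(SM)` unsold copies to the buyers
of `N_i(B)` with highest clause values (`Top`). Then
`SW(B) − SW(C) ≤ α·Rev(p, SM)`. -/
theorem stmt_12 {I : Type*} [Fintype I] [DecidableEq I] (nb : ℕ)
    (v : ℕ → Finset I → ℝ) (B SM C : ℕ → Finset I) (x : ℕ → I → ℝ)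
    (α : ℝ) (hα : 1 ≤ α)
    (kB : I → ℕ) (hkB : ∀ i, kB i = ((Finset.range nb).filter fun j => i ∈ B j).card)
    (kS : I → ℕ) (hkS : ∀ i, kS i = ((Finset.range nb).filter fun j => i ∈ SM j).card)
    (U : I → ℝ) (hU : ∀ i, U i = ∑ j ∈ (Finset.range nb).filter (fun j => i ∈ B j), x j i)
    (p : I → ℝ) (hp : ∀ i, kB i ≠ 0 → p i = U i / (α * kB i))
    (hpinf : ∀ j, j < nb → ∀ i ∈ SM j, kB i ≠ 0)
    -- x j is the maximizing XoS clause of buyer j for her bundle B j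
    (hxnn : ∀ j i, 0 ≤ x j i)
    (hclause : ∀ j, j < nb → ∀ T ⊆ B j, ∑ i ∈ T, x j i ≤ v j T)
    (hxB : ∀ j, j < nb → v j (B j) = ∑ i ∈ B j, x j i)
    -- sequential mechanism semantics for SM
    (hfeas : ∀ j, j < nb → SM j ⊆ avail kB SM j)
    (hopt : ∀ j, j < nb → ∀ T ⊆ avail kB SM j,
      v j T - ∑ i ∈ T, p i ≤ v j (SM j) - ∑ i ∈ SM j, p i)
    -- C = Alloc-Unsold(B, SM): each good's unsold copies go to the Top buyers
    (hC1 : ∀ j, j < nb → C j ⊆ B j)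
    (hC2 : ∀ i, ((Finset.range nb).filter fun j => i ∈ C j).card = kB i - kS i)
    (hC3 : ∀ i, ∀ j ∈ Finset.range nb, ∀ j' ∈ Finset.range nb,
      i ∈ C j → i ∈ B j' → i ∉ C j' → x j' i ≤ x j i) :
    (∑ j ∈ Finset.range nb, v j (B j)) - (∑ j ∈ Finset.range nb, v j (C j)) ≤
      α * (∑ j ∈ Finset.range nb, ∑ i ∈ SM j, p i) := by
  have hα0 : (0:ℝ) < α := lt_of_lt_of_le one_pos hα
  -- kS i ≤ kB i, via the remaining-supply invariant
  have hkSle : ∀ i, kS i ≤ kB i := by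
    intro i
    have key : ∀ t, t ≤ nb →
        ((Finset.range t).filter fun j => i ∈ SM j).card ≤ kB i ∧
        remSupply kB SM t i =
          kB i - ((Finset.range t).filter fun j => i ∈ SM j).card := by
      intro t
      induction t with
      | zero => intro _; simp [remSupply]
      | succ t ih =>
        intro ht
        obtain ⟨h1, h2⟩ := ih (Nat.le_of_succ_le ht)
        have htlt : t < nb := ht
        by_cases hi : i ∈ SM t
        · have hav : i ∈ avail kB SM t := hfeas t htlt hi
          have hpos : 0 < remSupply kB SM t i := by
            simpa [avail] using hav
          rw [h2] at hpos
          have hlt : ((Finset.range t).filter fun j => i ∈ SM j).card < kB i :=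
            Nat.lt_of_sub_pos hpos
          have hcard : ((Finset.range (t+1)).filter fun j => i ∈ SM j).card =
              ((Finset.range t).filter fun j => i ∈ SM j).card + 1 := by
            rw [Finset.range_add_one, Finset.filter_insert, if_pos hi,
              Finset.card_insert_of_notMem (by simp)]
          constructor
          · rw [hcard]; exact hlt
          · rw [hcard]
            show remSupply kB SM t i - (if i ∈ SM t then 1 else 0) = _
            rw [if_pos hi, h2]
            omega
        · have hcard : ((Finset.range (t+1)).filter fun j => i ∈ SM j).card =
              ((Finset.range t).filter fun j => i ∈ SM j).card := by
            rw [Finset.range_add_one, Finset.filter_insert, if_neg hi]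
          constructor
          · rw [hcard]; exact h1
          · rw [hcard]
            show remSupply kB SM t i - (if i ∈ SM t then 1 else 0) = _
            rw [if_neg hi, h2]
            omega

    rw [hkS i]
    exact (key nb le_rfl).1
  -- notation
  set F : I → Finset ℕ := fun i => (Finset.range nb).filter fun j => i ∈ B j with hF
  set D : I → Finset ℕ := fun i => (Finset.range nb).filter fun j => i ∈ C j with hD
  set E : I → Finset ℕ := fun i => (Finset.range nb).filter fun j => i ∈ B j \ C j with hE
  have hDF : ∀ i, D i ⊆ F i := by
    intro i j hj
    simp only [hD, hF, Finset.mem_filter, Finset.mem_range] at hj ⊢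
    exact ⟨hj.1, hC1 j hj.1 hj.2⟩
  have hEFD : ∀ i, E i = F i \ D i := by
    intro i
    ext j
    simp only [hE, hF, hD, Finset.mem_filter, Finset.mem_sdiff, Finset.mem_range]
    tauto
  have hcardE : ∀ i, (E i).card = kS i := by
    intro i
    rw [hEFD i, Finset.card_sdiff_of_subset (hDF i)]
    have : (D i).card = kB i - kS i := hC2 i
    rw [this, ← hkB i]
    have := hkSle i
    omega
  -- Step 1: SW(B) - SW(C) ≤ ∑_j ∑_{i ∈ B j \ C j} x j i
  have step1 : (∑ j ∈ Finset.range nb, v j (B j)) - (∑ j ∈ Finset.range nb, v j (C j)) ≤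
      ∑ j ∈ Finset.range nb, ∑ i ∈ B j \ C j, x j i := by
    rw [← Finset.sum_sub_distrib]
    apply Finset.sum_le_sum
    intro j hj
    have hjlt : j < nb := Finset.mem_range.mp hj
    have h1 : v j (B j) = ∑ i ∈ B j, x j i := hxB j hjlt
    have h2 : ∑ i ∈ C j, x j i ≤ v j (C j) := hclause j hjlt (C j) (hC1 j hjlt)
    have h3 : ∑ i ∈ B j \ C j, x j i = ∑ i ∈ B j, x j i - ∑ i ∈ C j, x j i := by
      rw [eq_sub_iff_add_eq, Finset.sum_sdiff (hC1 j hjlt)]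
    linarith
  -- Step 2: swap the sums
  have step2 : ∑ j ∈ Finset.range nb, ∑ i ∈ B j \ C j, x j i =
      ∑ i : I, ∑ j ∈ E i, x j i := by
    have : ∀ j, ∑ i ∈ B j \ C j, x j i = ∑ i : I, if i ∈ B j \ C j then x j i else 0 := by
      intro j
      rw [Finset.sum_ite_mem, Finset.univ_inter]
    simp_rw [this]
    rw [Finset.sum_comm]
    congr 1
    ext i
    rw [← Finset.sum_filter]
  -- Step 3: per-good bound
  have step3 : ∀ i : I, ∑ j ∈ E i, x j i ≤ (kS i : ℝ) * (α * p i) := by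
    intro i
    by_cases hkB0 : kB i = 0
    · have hkS0 : kS i = 0 := Nat.le_zero.mp (hkB0 ▸ hkSle i)
      have hEempty : E i = ∅ := by
        apply Finset.card_eq_zero.mp
        rw [hcardE i, hkS0]
      rw [hEempty, hkS0]
      simp
    · have hpEq : p i = U i / (α * kB i) := hp i hkB0
      have hkBpos : (0:ℝ) < (kB i : ℝ) := by positivity
      have hcomp : ∀ e ∈ E i, ∀ d ∈ D i, x e i ≤ x d i := by
        intro e he d hd
        simp only [hE, Finset.mem_filter, Finset.mem_sdiff] at he
        simp only [hD, Finset.mem_filter] at hd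
        exact hC3 i d hd.1 e he.1 hd.2 he.2.1 he.2.2
      have havg := avg_lemma (E i) (D i) (fun j => x j i) hcomp
      have hUsum : U i = (∑ j ∈ E i, x j i) + ∑ j ∈ D i, x j i := by
        rw [hU i, ← Finset.sum_sdiff (hDF i), ← hEFD i]
      have hcards : ((E i).card : ℝ) + ((D i).card : ℝ) = (kB i : ℝ) := by
        rw [hcardE i]
        have h' : (D i).card = kB i - kS i := hC2 i
        rw [h', Nat.cast_sub (hkSle i)]
        ring
      -- kB * Σ_E ≤ kS * U
      have hmain : (kB i : ℝ) * ∑ j ∈ E i, x j i ≤ (kS i : ℝ) * U i := by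
        have hcE : ((E i).card : ℝ) = (kS i : ℝ) := by rw [hcardE i]
        calc (kB i : ℝ) * ∑ j ∈ E i, x j i
            = ((E i).card : ℝ) * (∑ j ∈ E i, x j i) +
              ((D i).card : ℝ) * (∑ j ∈ E i, x j i) := by rw [← hcards]; ring
          _ ≤ ((E i).card : ℝ) * (∑ j ∈ E i, x j i) +
              ((E i).card : ℝ) * (∑ j ∈ D i, x j i) := by linarith [havg]
          _ = (kS i : ℝ) * U i := by rw [hcE, hUsum]; ring
      have hαp : α * p i = U i / (kB i : ℝ) := by
        rw [hpEq]
        field_simp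
      rw [hαp, ← mul_div_assoc, le_div_iff₀ hkBpos, mul_comm]
      exact hmain
  -- Step 4: rewrite revenue
  have step4 : ∑ j ∈ Finset.range nb, ∑ i ∈ SM j, p i = ∑ i : I, (kS i : ℝ) * p i := by
    have : ∀ j, ∑ i ∈ SM j, p i = ∑ i : I, if i ∈ SM j then p i else 0 := by
      intro j
      rw [Finset.sum_ite_mem, Finset.univ_inter]
    simp_rw [this]
    rw [Finset.sum_comm]
    congr 1
    ext i
    rw [← Finset.sum_filter, Finset.sum_const, hkS i, nsmul_eq_mul]
  calc (∑ j ∈ Finset.range nb, v j (B j)) - (∑ j ∈ Finset.range nb, v j (C j))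
      ≤ ∑ j ∈ Finset.range nb, ∑ i ∈ B j \ C j, x j i := step1
    _ = ∑ i : I, ∑ j ∈ E i, x j i := step2
    _ ≤ ∑ i : I, (kS i : ℝ) * (α * p i) := Finset.sum_le_sum fun i _ => step3 i
    _ = α * ∑ i : I, (kS i : ℝ) * p i := by rw [Finset.mul_sum]; congr 1; ext i; ring
    _ = α * (∑ j ∈ Finset.range nb, ∑ i ∈ SM j, p i) := by rw [step4]
end

section
/- In a multi-unit market with m ≥ 2 identical items and buyers satisfying the no-overwhelming-buyer assumption (v_j(m/2 + q) = v_j(m/2) for all q ≥ 0), suppose at price p^(0) every valid envy-free allocation S^(0) is locally maximal, i.e., for any buyer j indifferent between her bundle size |S_j^(0)| and a larger size q at price p^(0), reallocating would exceed supply: θ(S^(0)) − |S_j^(0)| + q > m, and some buyer's demand strictly dropped at p^(0). Then θ(S^(0)) > m/2, i.e., more than half the items are sold. -/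
/-- In a multi-unit market with `m ≥ 2` items, no-overwhelming-buyer
valuations, a locally maximal envy-free allocation `s` at price `p0`, and some
buyer whose demand strictly dropped at `p0` (she is indifferent to a larger
quantity `b ≤ m/2`), more than half the items are sold: `θ(s) > m/2`. -/
theorem stmt_14 (m nb : ℕ) (hm : 2 ≤ m) (v : ℕ → ℕ → ℝ) (p0 : ℝ) (s : ℕ → ℕ)
    (hno : ∀ j, j < nb → ∀ q : ℕ, v j (m / 2 + q) = v j (m / 2))
    (hlocal : ∀ j, j < nb → ∀ q : ℕ, s j < q →
      v j q - p0 * q = v j (s j) - p0 * s j →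
      m + s j < (∑ j' ∈ Finset.range nb, s j') + q)
    (hdrop : ∃ j, j < nb ∧ ∃ b : ℕ, s j < b ∧ b ≤ m / 2 ∧
      v j b - p0 * b = v j (s j) - p0 * s j) :
    (m : ℝ) / 2 < (∑ j ∈ Finset.range nb, s j : ℕ) := by
  obtain ⟨j, hj, b, hsb, hbm, hind⟩ := hdrop
  have h := hlocal j hj b hsb hind
  have h2 : m < 2 * (∑ j' ∈ Finset.range nb, s j') := by omega
  have : (m : ℝ) < 2 * (∑ j' ∈ Finset.range nb, s j' : ℕ) := by exact_mod_cast h2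
  linarith
end

section
/- Consider a sequence of valid pricing outcomes (p^(t), S^(t)) for t = 0,...,γ of a simultaneous mechanism where, for each t < γ: (a) each buyer j's bundle S_j^(t+1) maximizes utility at prices p^(t+1); (b) for every good i unsaturated at round t+1 (price at the reserve floor), p_i^(t+1) ≤ 2·p_i^(t); and (c) every saturated good at round t+1 is fully sold, so Σ_{i saturated} p_i^(t+1)·k_i ≤ Rev(p^(t+1), S^(t+1)). Then SW(S^(t)) − SW(S^(t+1)) ≤ 2·Rev(p^(t), S^(t)). -/
/-- Core price-doubling inequality of the black-box welfare-to-revenue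
reduction: if at round `t+1` every buyer's bundle is utility-maximizing at
prices `p^(t+1)`, every unsaturated good satisfies `p^(t+1) ≤ 2·p^(t)`, and the
saturated goods are fully sold (their full-supply revenue is at most
`Rev(p^(t+1), S^(t+1))`), then `SW(S^(t)) − SW(S^(t+1)) ≤ 2·Rev(p^(t), S^(t))`. -/
theorem stmt_19 {I : Type*} [Fintype I] [DecidableEq I] (nb : ℕ)
    (v : ℕ → Finset I → ℝ) (k : I → ℕ)
    (pt pt1 : I → ℝ) (St St1 : ℕ → Finset I) (sat : Finset I)
    (hptnn : ∀ i, 0 ≤ pt i) (hpt1nn : ∀ i, 0 ≤ pt1 i)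
    -- validity: the round-t outcome respects the supplies
    (hvalid : ∀ i, ((Finset.range nb).filter fun j => i ∈ St j).card ≤ k i)
    -- (a) each buyer's bundle at round t+1 maximizes utility at prices p^(t+1)
    (hoptim : ∀ j, j < nb → ∀ T : Finset I,
      v j T - ∑ i ∈ T, pt1 i ≤ v j (St1 j) - ∑ i ∈ St1 j, pt1 i)
    -- (b) unsaturated goods at round t+1 are priced at most twice round t
    (hdouble : ∀ i, i ∉ sat → pt1 i ≤ 2 * pt i)
    -- (c) saturated goods are fully sold
    (hsat : ∑ i ∈ sat, pt1 i * k i ≤ ∑ j ∈ Finset.range nb, ∑ i ∈ St1 j, pt1 i) :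
    (∑ j ∈ Finset.range nb, v j (St j)) - (∑ j ∈ Finset.range nb, v j (St1 j)) ≤
      2 * ∑ j ∈ Finset.range nb, ∑ i ∈ St j, pt i := by

  -- From optimality: SW(St) - SW(St1) ≤ Rev(pt1,St) - Rev(pt1,St1)
  have h1 : (∑ j ∈ Finset.range nb, v j (St j)) - (∑ j ∈ Finset.range nb, v j (St1 j)) ≤
      (∑ j ∈ Finset.range nb, ∑ i ∈ St j, pt1 i) -
      (∑ j ∈ Finset.range nb, ∑ i ∈ St1 j, pt1 i) := by
    rw [← Finset.sum_sub_distrib, ← Finset.sum_sub_distrib]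
    apply Finset.sum_le_sum
    intro j hj
    have := hoptim j (Finset.mem_range.mp hj) (St j)
    linarith
  -- split each Rev(pt1, St j) into saturated and unsaturated parts
  have hsplit : ∀ j, ∑ i ∈ St j, pt1 i =
      (∑ i ∈ (St j) \ sat, pt1 i) + ∑ i ∈ St j ∩ sat, pt1 i := by
    intro j
    rw [add_comm, Finset.sum_inter_add_sum_sdiff]
  -- unsaturated part ≤ 2 * Rev(pt, St j)
  have hun : ∀ j, ∑ i ∈ (St j) \ sat, pt1 i ≤ 2 * ∑ i ∈ St j, pt i := by
    intro j
    calc ∑ i ∈ (St j) \ sat, pt1 i ≤ ∑ i ∈ (St j) \ sat, 2 * pt i := by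
          apply Finset.sum_le_sum
          intro i hi
          exact hdouble i (Finset.mem_sdiff.mp hi).2
      _ ≤ ∑ i ∈ St j, 2 * pt i := by
          apply Finset.sum_le_sum_of_subset_of_nonneg Finset.sdiff_subset
          intro i _ _
          have := hptnn i; linarith
      _ = 2 * ∑ i ∈ St j, pt i := by rw [Finset.mul_sum]
  -- saturated part summed over buyers ≤ supply revenue of saturated goods
  have hsatsum : ∑ j ∈ Finset.range nb, ∑ i ∈ St j ∩ sat, pt1 i ≤
      ∑ i ∈ sat, pt1 i * k i := by
    have hrw : ∀ j, ∑ i ∈ St j ∩ sat, pt1 i =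
        ∑ i ∈ sat, if i ∈ St j then pt1 i else 0 := by
      intro j
      rw [← Finset.sum_filter, Finset.filter_mem_eq_inter, Finset.inter_comm]
    calc ∑ j ∈ Finset.range nb, ∑ i ∈ St j ∩ sat, pt1 i
        = ∑ i ∈ sat, ∑ j ∈ Finset.range nb, if i ∈ St j then pt1 i else 0 := by
          simp_rw [hrw]
          exact Finset.sum_comm
      _ = ∑ i ∈ sat, pt1 i *
            (((Finset.range nb).filter fun j => i ∈ St j).card : ℝ) := by
          apply Finset.sum_congr rfl
          intro i _
          rw [← Finset.sum_filter, Finset.sum_const, nsmul_eq_mul, mul_comm]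
      _ ≤ ∑ i ∈ sat, pt1 i * k i := by
          apply Finset.sum_le_sum
          intro i _
          exact mul_le_mul_of_nonneg_left (Nat.cast_le.mpr (hvalid i)) (hpt1nn i)
  have h2 : ∑ j ∈ Finset.range nb, ∑ i ∈ St j, pt1 i ≤
      2 * (∑ j ∈ Finset.range nb, ∑ i ∈ St j, pt i) +
      ∑ j ∈ Finset.range nb, ∑ i ∈ St1 j, pt1 i := by
    calc ∑ j ∈ Finset.range nb, ∑ i ∈ St j, pt1 i
        = ∑ j ∈ Finset.range nb, ((∑ i ∈ (St j) \ sat, pt1 i) +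
            ∑ i ∈ St j ∩ sat, pt1 i) := by
          exact Finset.sum_congr rfl fun j _ => hsplit j
      _ = (∑ j ∈ Finset.range nb, ∑ i ∈ (St j) \ sat, pt1 i) +
            ∑ j ∈ Finset.range nb, ∑ i ∈ St j ∩ sat, pt1 i := Finset.sum_add_distrib
      _ ≤ (∑ j ∈ Finset.range nb, 2 * ∑ i ∈ St j, pt i) +
            ∑ i ∈ sat, pt1 i * k i := by
          exact add_le_add (Finset.sum_le_sum fun j _ => hun j) hsatsum
      _ ≤ 2 * (∑ j ∈ Finset.range nb, ∑ i ∈ St j, pt i) +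
            ∑ j ∈ Finset.range nb, ∑ i ∈ St1 j, pt1 i := by
          rw [← Finset.mul_sum]
          gcongr
  linarith
end
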